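/- arXiv:0812.0492 — 4 statements merged into one kernel-verified Lean document; each statement's English description precedes it below -/
import Mathlib

section
/- If the minmax value for Player 1 in G is strictly smaller than r, then (⊥, ⊥, ⊥) is a trembling hand perfect equilibrium of G'. -/
open Filter

/-- A mixed strategy over a finite pure strategy set. -/
def IsMixed {S : Type*} [Fintype S] (σ : S → ℝ) : Prop :=
  (∀ a, 0 ≤ σ a) ∧ ∑ a, σ a = 1

/-- A fully mixed strategy: positive probability on every pure strategy. -/
def IsFullyMixed {S : Type*} [Fintype S] (σ : S → ℝ) : Prop :=
  (∀ a, 0 < σ a) ∧ ∑ a, σ a = 1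

/-- The point mass on a pure strategy. -/
def pureStrat {S : Type*} [DecidableEq S] (a : S) : S → ℝ :=
  fun b => if b = a then 1 else 0

/-- Expected payoff (w.r.t. payoff function `w`) in a three-player game when the
players play mixed strategies `σ1`, `σ2`, `σ3`. -/
noncomputable def expMix3 {S1 S2 S3 : Type*} [Fintype S1] [Fintype S2] [Fintype S3]
    (w : S1 → S2 → S3 → ℝ) (σ1 : S1 → ℝ) (σ2 : S2 → ℝ) (σ3 : S3 → ℝ) : ℝ :=
  ∑ a, ∑ b, ∑ c, σ1 a * σ2 b * σ3 c * w a b c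

/-- Player 1's expected payoff from pure strategy `a` against mixed `σ2`, `σ3`. -/
noncomputable def expPure1 {S1 S2 S3 : Type*} [Fintype S2] [Fintype S3]
    (w : S1 → S2 → S3 → ℝ) (a : S1) (σ2 : S2 → ℝ) (σ3 : S3 → ℝ) : ℝ :=
  ∑ b, ∑ c, σ2 b * σ3 c * w a b c

/-- Nash equilibrium of a three-player game with payoff functions `w1, w2, w3`. -/
def IsNash3 {S1 S2 S3 : Type*} [Fintype S1] [Fintype S2] [Fintype S3]
    (w1 w2 w3 : S1 → S2 → S3 → ℝ) (σ1 : S1 → ℝ) (σ2 : S2 → ℝ) (σ3 : S3 → ℝ) : Prop :=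
  IsMixed σ1 ∧ IsMixed σ2 ∧ IsMixed σ3 ∧
  (∀ τ, IsMixed τ → expMix3 w1 τ σ2 σ3 ≤ expMix3 w1 σ1 σ2 σ3) ∧
  (∀ τ, IsMixed τ → expMix3 w2 σ1 τ σ3 ≤ expMix3 w2 σ1 σ2 σ3) ∧
  (∀ τ, IsMixed τ → expMix3 w3 σ1 σ2 τ ≤ expMix3 w3 σ1 σ2 σ3)

/-- Trembling hand perfection of a profile in a three-player game: some sequence of
fully mixed profiles converging (pointwise) to the profile against which, eventually,
each player's given strategy is a best reply. -/
def IsTHP3 {S1 S2 S3 : Type*} [Fintype S1] [Fintype S2] [Fintype S3]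
    (w1 w2 w3 : S1 → S2 → S3 → ℝ) (μ1 : S1 → ℝ) (μ2 : S2 → ℝ) (μ3 : S3 → ℝ) : Prop :=
  ∃ σ1 : ℕ → S1 → ℝ, ∃ σ2 : ℕ → S2 → ℝ, ∃ σ3 : ℕ → S3 → ℝ,
    (∀ k, IsFullyMixed (σ1 k) ∧ IsFullyMixed (σ2 k) ∧ IsFullyMixed (σ3 k)) ∧
    (∀ a, Tendsto (fun k => σ1 k a) atTop (nhds (μ1 a))) ∧
    (∀ b, Tendsto (fun k => σ2 k b) atTop (nhds (μ2 b))) ∧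
    (∀ c, Tendsto (fun k => σ3 k c) atTop (nhds (μ3 c))) ∧
    ∃ N, ∀ k ≥ N,
      (∀ τ, IsMixed τ → expMix3 w1 τ (σ2 k) (σ3 k) ≤ expMix3 w1 μ1 (σ2 k) (σ3 k)) ∧
      (∀ τ, IsMixed τ → expMix3 w2 (σ1 k) τ (σ3 k) ≤ expMix3 w2 (σ1 k) μ2 (σ3 k)) ∧
      (∀ τ, IsMixed τ → expMix3 w3 (σ1 k) (σ2 k) τ ≤ expMix3 w3 (σ1 k) (σ2 k) μ3)

/-- The minmax value of Player 1 in a three-player game: the infimum over mixed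
strategies of Players 2 and 3 of the best expected payoff of Player 1. -/
noncomputable def minmaxVal {S1 S2 S3 : Type*} [Fintype S1] [Fintype S2] [Fintype S3]
    (w : S1 → S2 → S3 → ℝ) : ℝ :=
  sInf {x | ∃ σ2 σ3, IsMixed σ2 ∧ IsMixed σ3 ∧ x = ⨆ a, expPure1 w a σ2 σ3}

/-- Player 1's payoff in the game `G'`: `r` if some player plays `⊥` (i.e. `none`),
and the `G`-payoff otherwise. -/
noncomputable def payBot {S1 S2 S3 : Type*} (u1 : S1 → S2 → S3 → ℤ) (r : ℤ) :
    Option S1 → Option S2 → Option S3 → ℝ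
  | some a, some b, some c => (u1 a b c : ℝ)
  | _, _, _ => (r : ℝ)

/-- The all-zero payoff function (for Players 2 and 3 in `G'`). -/
def zeroPay {S1 S2 S3 : Type*} : Option S1 → Option S2 → Option S3 → ℝ :=
  fun _ _ _ => 0

section Aux

lemma expMix3_eq_sum {S1 S2 S3 : Type*} [Fintype S1] [Fintype S2] [Fintype S3]
    (w : S1 → S2 → S3 → ℝ) (σ1 : S1 → ℝ) (σ2 : S2 → ℝ) (σ3 : S3 → ℝ) :
    expMix3 w σ1 σ2 σ3 = ∑ a, σ1 a * expPure1 w a σ2 σ3 := by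
  unfold expMix3 expPure1
  refine Finset.sum_congr rfl fun a _ => ?_
  rw [Finset.mul_sum]
  refine Finset.sum_congr rfl fun b _ => ?_
  rw [Finset.mul_sum]
  exact Finset.sum_congr rfl fun c _ => by ring

lemma sum_sum_mul_const {S2 S3 : Type*} [Fintype S2] [Fintype S3]
    (σ2 : S2 → ℝ) (σ3 : S3 → ℝ) (h2 : ∑ b, σ2 b = 1) (h3 : ∑ c, σ3 c = 1) (x : ℝ) :
    ∑ b, ∑ c, σ2 b * σ3 c * x = x := by
  have hb : ∀ b, ∑ c, σ2 b * σ3 c * x = σ2 b * x := by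
    intro b
    calc ∑ c, σ2 b * σ3 c * x = (∑ c, σ3 c) * (σ2 b * x) := by
          rw [Finset.sum_mul]; exact Finset.sum_congr rfl fun c _ => by ring
    _ = σ2 b * x := by rw [h3, one_mul]
  rw [Finset.sum_congr rfl fun b _ => hb b, ← Finset.sum_mul, h2, one_mul]

lemma payBot_none₁ {S1 S2 S3 : Type*} (u1 : S1 → S2 → S3 → ℤ) (r : ℤ) (b c) :
    payBot u1 r none b c = (r : ℝ) := rfl
lemma payBot_none₂ {S1 S2 S3 : Type*} (u1 : S1 → S2 → S3 → ℤ) (r : ℤ) (a c) :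
    payBot u1 r a none c = (r : ℝ) := by cases a <;> cases c <;> rfl
lemma payBot_none₃ {S1 S2 S3 : Type*} (u1 : S1 → S2 → S3 → ℤ) (r : ℤ) (a b) :
    payBot u1 r a b none = (r : ℝ) := by cases a <;> cases b <;> rfl

/-- Extend a strategy on `S` to `Option S`, putting weight `1 - e` on `none`. -/
noncomputable def extStrat {S : Type*} (e : ℝ) (τ : S → ℝ) : Option S → ℝ :=
  fun o => o.elim (1 - e) (fun b => e * τ b)

lemma extStrat_fullyMixed {S : Type*} [Fintype S] {e : ℝ} (he0 : 0 < e) (he1 : e < 1)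
    {τ : S → ℝ} (hpos : ∀ b, 0 < τ b) (hsum : ∑ b, τ b = 1) :
    IsFullyMixed (extStrat e τ) := by
  constructor
  · rintro (_ | b)
    · simpa [extStrat] using by linarith
    · exact mul_pos he0 (hpos b)
  · rw [Fintype.sum_option]
    simp only [extStrat, Option.elim, ← Finset.mul_sum, hsum]
    ring

lemma extStrat_sum {S : Type*} [Fintype S] {e : ℝ}
    {τ : S → ℝ} (hsum : ∑ b, τ b = 1) : ∑ o, extStrat e τ o = 1 := by
  rw [Fintype.sum_option]
  simp only [extStrat, Option.elim, ← Finset.mul_sum, hsum]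
  ring

lemma expPure1_none' {S1 S2 S3 : Type*} [Fintype S2] [Fintype S3]
    (u1 : S1 → S2 → S3 → ℤ) (r : ℤ) (σ2 : Option S2 → ℝ) (σ3 : Option S3 → ℝ)
    (h2 : ∑ b, σ2 b = 1) (h3 : ∑ c, σ3 c = 1) :
    expPure1 (payBot u1 r) none σ2 σ3 = r := by
  unfold expPure1
  simp only [payBot_none₁]
  exact sum_sum_mul_const σ2 σ3 h2 h3 _

lemma expPure1_some_ext {S1 S2 S3 : Type*} [Fintype S2] [Fintype S3]
    (u1 : S1 → S2 → S3 → ℤ) (r : ℤ) (a : S1) {e2 e3 : ℝ}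
    {τ2 : S2 → ℝ} {τ3 : S3 → ℝ} (h2 : ∑ b, τ2 b = 1) (h3 : ∑ c, τ3 c = 1) :
    expPure1 (payBot u1 r) (some a) (extStrat e2 τ2) (extStrat e3 τ3)
      = (1 - e2 * e3) * r
        + e2 * e3 * expPure1 (fun a b c => (u1 a b c : ℝ)) a τ2 τ3 := by
  unfold expPure1
  rw [Fintype.sum_option]
  have hnone : ∑ c' : Option S3, extStrat e2 τ2 none * extStrat e3 τ3 c'
        * payBot u1 r (some a) none c' = (1 - e2) * r := by
    have : ∀ c' : Option S3, extStrat e2 τ2 none * extStrat e3 τ3 c'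
        * payBot u1 r (some a) none c' = extStrat e3 τ3 c' * ((1 - e2) * r) := by
      intro c'; rw [payBot_none₂]; simp only [extStrat, Option.elim]; ring
    rw [Finset.sum_congr rfl fun c' _ => this c', ← Finset.sum_mul,
      extStrat_sum h3, one_mul]
  rw [hnone]
  have hsome : ∀ b, ∑ c' : Option S3, extStrat e2 τ2 (some b) * extStrat e3 τ3 c'
      * payBot u1 r (some a) (some b) c'
      = τ2 b * (e2 * (1 - e3) * r) + τ2 b * (e2 * e3 * ∑ c, τ3 c * (u1 a b c : ℝ)) := by
    intro b
    rw [Fintype.sum_option]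
    have h1 : extStrat e2 τ2 (some b) * extStrat e3 τ3 none
        * payBot u1 r (some a) (some b) none = τ2 b * (e2 * (1 - e3) * r) := by
      rw [payBot_none₃]; simp only [extStrat, Option.elim]; ring
    have h2' : ∑ c, extStrat e2 τ2 (some b) * extStrat e3 τ3 (some c)
        * payBot u1 r (some a) (some b) (some c)
        = τ2 b * (e2 * e3 * ∑ c, τ3 c * (u1 a b c : ℝ)) := by
      rw [Finset.mul_sum, Finset.mul_sum]
      refine Finset.sum_congr rfl fun c _ => ?_
      show e2 * τ2 b * (e3 * τ3 c) * (u1 a b c : ℝ) = _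
      ring
    rw [h1, h2']
  rw [Finset.sum_congr rfl fun b _ => hsome b, Finset.sum_add_distrib,
    ← Finset.sum_mul, h2, one_mul]
  have hfin : ∑ x, τ2 x * (e2 * e3 * ∑ c, τ3 c * (u1 a x c : ℝ))
      = e2 * e3 * ∑ b, ∑ c, τ2 b * τ3 c * (u1 a b c : ℝ) := by
    rw [Finset.mul_sum]
    refine Finset.sum_congr rfl fun b _ => ?_
    simp only [Finset.mul_sum]
    exact Finset.sum_congr rfl fun c _ => by ring
  rw [hfin]
  show _ = (1 - e2 * e3) * (r:ℝ) + e2 * e3 * ∑ b, ∑ c, τ2 b * τ3 c * (u1 a b c : ℝ)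
  ring

lemma uniform_isMixed {S : Type*} [Fintype S] [Nonempty S] :
    IsMixed (fun _ : S => (Fintype.card S : ℝ)⁻¹) := by
  constructor
  · intro a; positivity
  · rw [Finset.sum_const, Finset.card_univ, nsmul_eq_mul, mul_inv_cancel₀]
    exact_mod_cast Fintype.card_ne_zero

lemma uniform_pos {S : Type*} [Fintype S] [Nonempty S] :
    0 < (Fintype.card S : ℝ)⁻¹ := by positivity

end Aux

/-- if Player 1's minmax value in `G` is strictly smaller than `r`,
then `(⊥, ⊥, ⊥)` is a trembling hand perfect equilibrium of `G'`. -/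
theorem bot_profile_isTHP_of_minmax_lt
    {S1 S2 S3 : Type*} [Fintype S1] [Fintype S2] [Fintype S3]
    [Nonempty S1] [Nonempty S2] [Nonempty S3]
    [DecidableEq S1] [DecidableEq S2] [DecidableEq S3]
    (u1 : S1 → S2 → S3 → ℤ) (r : ℤ)
    (h : minmaxVal (fun a b c => (u1 a b c : ℝ)) < (r : ℝ)) :
    IsTHP3 (payBot u1 r) zeroPay zeroPay
      (pureStrat (none : Option S1)) (pureStrat (none : Option S2))
      (pureStrat (none : Option S3)) := by
  classical
  -- extract good mixed strategies of players 2 and 3 in G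
  have hne : Set.Nonempty {x | ∃ σ2 σ3, IsMixed σ2 ∧ IsMixed σ3 ∧
      x = ⨆ a, expPure1 (fun a b c => (u1 a b c : ℝ)) a σ2 σ3} :=
    ⟨_, fun _ => (Fintype.card S2 : ℝ)⁻¹, fun _ => (Fintype.card S3 : ℝ)⁻¹,
      uniform_isMixed, uniform_isMixed, rfl⟩
  unfold minmaxVal at h
  obtain ⟨x, ⟨σ2s, σ3s, hm2, hm3, hx⟩, hxr⟩ := exists_lt_of_csInf_lt hne h
  have hE : ∀ a : S1, expPure1 (fun a b c => (u1 a b c : ℝ)) a σ2s σ3s < r := by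
    intro a
    refine lt_of_le_of_lt ?_ (hx ▸ hxr)
    exact le_ciSup (f := fun a => expPure1 (fun a b c => (u1 a b c : ℝ)) a σ2s σ3s)
      (Set.Finite.bddAbove (Set.finite_range _)) a
  -- the tremble size
  set ε : ℕ → ℝ := fun k => ((k : ℝ) + 2)⁻¹ with hεdef
  have hε0 : ∀ k, 0 < ε k := fun k => by positivity
  have hε1 : ∀ k, ε k < 1 := by
    intro k
    rw [hεdef]
    have h2 : (1 : ℝ) < (k : ℝ) + 2 := by
      have := Nat.cast_nonneg (α := ℝ) k; linarith
    exact inv_lt_one_of_one_lt₀ h2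
  have hεlim : Filter.Tendsto ε atTop (nhds 0) := by
    rw [hεdef]
    exact tendsto_inv_atTop_zero.comp
      (tendsto_atTop_add_const_right _ 2 tendsto_natCast_atTop_atTop)
  -- conditional strategies
  set τ1 : S1 → ℝ := fun _ => (Fintype.card S1 : ℝ)⁻¹ with hτ1def
  set τ2 : ℕ → S2 → ℝ := fun k b => (1 - ε k) * σ2s b + ε k * (Fintype.card S2 : ℝ)⁻¹
    with hτ2def
  set τ3 : ℕ → S3 → ℝ := fun k c => (1 - ε k) * σ3s c + ε k * (Fintype.card S3 : ℝ)⁻¹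
    with hτ3def
  have hτ2pos : ∀ k b, 0 < τ2 k b := fun k b =>
    add_pos_of_nonneg_of_pos
      (mul_nonneg (by have := hε1 k; linarith) (hm2.1 b))
      (mul_pos (hε0 k) uniform_pos)
  have hτ3pos : ∀ k c, 0 < τ3 k c := fun k c =>
    add_pos_of_nonneg_of_pos
      (mul_nonneg (by have := hε1 k; linarith) (hm3.1 c))
      (mul_pos (hε0 k) uniform_pos)
  have hτ2sum : ∀ k, ∑ b, τ2 k b = 1 := by
    intro k
    rw [hτ2def]
    rw [Finset.sum_add_distrib, ← Finset.mul_sum, ← Finset.mul_sum, hm2.2,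
      (uniform_isMixed (S := S2)).2]
    ring
  have hτ3sum : ∀ k, ∑ c, τ3 k c = 1 := by
    intro k
    rw [hτ3def]
    rw [Finset.sum_add_distrib, ← Finset.mul_sum, ← Finset.mul_sum, hm3.2,
      (uniform_isMixed (S := S3)).2]
    ring
  have hτ1sum : ∑ a, τ1 a = 1 := (uniform_isMixed (S := S1)).2
  -- the trembling sequences
  refine ⟨fun k => extStrat (ε k) τ1, fun k => extStrat (ε k) (τ2 k),
    fun k => extStrat (ε k) (τ3 k), ?_, ?_, ?_, ?_, ?_⟩
  · intro k
    exact ⟨extStrat_fullyMixed (hε0 k) (hε1 k) (fun _ => uniform_pos) hτ1sum,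
      extStrat_fullyMixed (hε0 k) (hε1 k) (hτ2pos k) (hτ2sum k),
      extStrat_fullyMixed (hε0 k) (hε1 k) (hτ3pos k) (hτ3sum k)⟩
  · rintro (_ | a)
    · have : Filter.Tendsto (fun k => 1 - ε k) atTop (nhds 1) := by
        simpa using tendsto_const_nhds.sub hεlim
      simpa [extStrat, pureStrat] using this
    · have : Filter.Tendsto (fun k => ε k * τ1 a) atTop (nhds 0) := by
        simpa using hεlim.mul (tendsto_const_nhds (x := τ1 a))
      simpa [extStrat, pureStrat] using this
  · rintro (_ | b)
    · have : Filter.Tendsto (fun k => 1 - ε k) atTop (nhds 1) := by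
        simpa using tendsto_const_nhds.sub hεlim
      simpa [extStrat, pureStrat] using this
    · have hτ : Filter.Tendsto (fun k => τ2 k b) atTop (nhds (σ2s b)) := by
        rw [hτ2def]
        have := (((tendsto_const_nhds (x := (1:ℝ))).sub hεlim).mul
          (tendsto_const_nhds (x := σ2s b))).add
          (hεlim.mul (tendsto_const_nhds (x := (Fintype.card S2 : ℝ)⁻¹)))
        simpa using this
      have : Filter.Tendsto (fun k => ε k * τ2 k b) atTop (nhds 0) := by
        simpa using hεlim.mul hτ
      simpa [extStrat, pureStrat] using this
  · rintro (_ | c)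
    · have : Filter.Tendsto (fun k => 1 - ε k) atTop (nhds 1) := by
        simpa using tendsto_const_nhds.sub hεlim
      simpa [extStrat, pureStrat] using this
    · have hτ : Filter.Tendsto (fun k => τ3 k c) atTop (nhds (σ3s c)) := by
        rw [hτ3def]
        have := (((tendsto_const_nhds (x := (1:ℝ))).sub hεlim).mul
          (tendsto_const_nhds (x := σ3s c))).add
          (hεlim.mul (tendsto_const_nhds (x := (Fintype.card S3 : ℝ)⁻¹)))
        simpa using this
      have : Filter.Tendsto (fun k => ε k * τ3 k c) atTop (nhds 0) := by
        simpa using hεlim.mul hτ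
      simpa [extStrat, pureStrat] using this
  · -- eventual best replies
    have hτ2lim : ∀ b, Filter.Tendsto (fun k => τ2 k b) atTop (nhds (σ2s b)) := by
      intro b
      rw [hτ2def]
      have := (((tendsto_const_nhds (x := (1:ℝ))).sub hεlim).mul
        (tendsto_const_nhds (x := σ2s b))).add
        (hεlim.mul (tendsto_const_nhds (x := (Fintype.card S2 : ℝ)⁻¹)))
      simpa using this
    have hτ3lim : ∀ c, Filter.Tendsto (fun k => τ3 k c) atTop (nhds (σ3s c)) := by
      intro c
      rw [hτ3def]
      have := (((tendsto_const_nhds (x := (1:ℝ))).sub hεlim).mul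
        (tendsto_const_nhds (x := σ3s c))).add
        (hεlim.mul (tendsto_const_nhds (x := (Fintype.card S3 : ℝ)⁻¹)))
      simpa using this
    have hTend : ∀ a : S1, Filter.Tendsto
        (fun k => expPure1 (fun a b c => (u1 a b c : ℝ)) a (τ2 k) (τ3 k)) atTop
        (nhds (expPure1 (fun a b c => (u1 a b c : ℝ)) a σ2s σ3s)) := by
      intro a
      unfold expPure1
      exact tendsto_finset_sum _ fun b _ => tendsto_finset_sum _ fun c _ =>
        ((hτ2lim b).mul (hτ3lim c)).mul tendsto_const_nhds
    have hEv : ∀ᶠ k in atTop, ∀ a : S1,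
        expPure1 (fun a b c => (u1 a b c : ℝ)) a (τ2 k) (τ3 k) ≤ r :=
      eventually_all.2 fun a => (hTend a).eventually_le_const (hE a)
    obtain ⟨N, hN⟩ := eventually_atTop.1 hEv
    refine ⟨N, fun k hk => ⟨?_, ?_, ?_⟩⟩
    · -- player 1: ⊥ is a best reply
      intro τ hτ
      have h2sum : ∑ o, extStrat (ε k) (τ2 k) o = 1 := extStrat_sum (hτ2sum k)
      have h3sum : ∑ o, extStrat (ε k) (τ3 k) o = 1 := extStrat_sum (hτ3sum k)
      have hRHS : expMix3 (payBot u1 r) (pureStrat (none : Option S1))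
          (extStrat (ε k) (τ2 k)) (extStrat (ε k) (τ3 k)) = r := by
        rw [expMix3_eq_sum, Fintype.sum_option]
        have h0 : ∀ a : S1, pureStrat (none : Option S1) (some a) *
            expPure1 (payBot u1 r) (some a) (extStrat (ε k) (τ2 k))
              (extStrat (ε k) (τ3 k)) = 0 := by
          intro a; simp [pureStrat]
        rw [Finset.sum_congr rfl fun a _ => h0 a, Finset.sum_const_zero, add_zero]
        have h1 : pureStrat (none : Option S1) none = 1 := by simp [pureStrat]
        rw [h1, one_mul]
        exact expPure1_none' u1 r _ _ h2sum h3sum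
      have hEle : ∀ a' : Option S1, expPure1 (payBot u1 r) a'
          (extStrat (ε k) (τ2 k)) (extStrat (ε k) (τ3 k)) ≤ r := by
        rintro (_ | a)
        · exact le_of_eq (expPure1_none' u1 r _ _ h2sum h3sum)
        · rw [expPure1_some_ext u1 r a (hτ2sum k) (hτ3sum k)]
          have hEa := hN k hk a
          have hx2 : (0:ℝ) ≤ ε k * ε k := mul_nonneg (hε0 k).le (hε0 k).le
          nlinarith
      rw [hRHS, expMix3_eq_sum]
      calc ∑ a', τ a' * expPure1 (payBot u1 r) a'
            (extStrat (ε k) (τ2 k)) (extStrat (ε k) (τ3 k))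
          ≤ ∑ a', τ a' * r :=
            Finset.sum_le_sum fun a' _ =>
              mul_le_mul_of_nonneg_left (hEle a') (hτ.1 a')
        _ = r := by rw [← Finset.sum_mul, hτ.2, one_mul]
    · intro τ _
      have hz : ∀ (ρ1 : Option S1 → ℝ) (ρ2 : Option S2 → ℝ) (ρ3 : Option S3 → ℝ),
          expMix3 (zeroPay (S1 := S1) (S2 := S2) (S3 := S3)) ρ1 ρ2 ρ3 = 0 := by
        intros; unfold expMix3 zeroPay; simp
      rw [hz, hz]
    · intro τ _
      have hz : ∀ (ρ1 : Option S1 → ℝ) (ρ2 : Option S2 → ℝ) (ρ3 : Option S3 → ℝ),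
          expMix3 (zeroPay (S1 := S1) (S2 := S2) (S3 := S3)) ρ1 ρ2 ρ3 = 0 := by
        intros; unfold expMix3 zeroPay; simp
      rw [hz, hz]
end

section
/- If Players 2 and 3 play fully mixed strategies σ2 and σ3 in G' (each assigning positive probability to every pure strategy including ⊥), and the minmax value of Player 1 in G is strictly greater than r, then Player 1 has a pure reply to (σ2, σ3) with expected payoff strictly greater than r; in particular ⊥ is not a best reply for Player 1. -/
open Filter

lemma expMix3_pure {S1 S2 S3 : Type*} [Fintype S1] [Fintype S2] [Fintype S3]
    [DecidableEq S1] (w : S1 → S2 → S3 → ℝ) (a : S1) (σ2 : S2 → ℝ) (σ3 : S3 → ℝ) :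
    expMix3 w (pureStrat a) σ2 σ3 = expPure1 w a σ2 σ3 := by
  simp [expMix3, expPure1, pureStrat, ite_mul, Finset.sum_ite_eq', Finset.mem_univ]

lemma pureStrat_mixed {S : Type*} [Fintype S] [DecidableEq S] (a : S) :
    IsMixed (pureStrat a) := by
  constructor
  · intro b; simp [pureStrat]; positivity
  · simp [pureStrat]

lemma expPure1_ge {S1 S2 S3 : Type*} [Fintype S1] [Fintype S2] [Fintype S3]
    [Nonempty S1] [Nonempty S2] [Nonempty S3]
    (w : S1 → S2 → S3 → ℝ) (a : S1) (σ2 : S2 → ℝ) (σ3 : S3 → ℝ)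
    (h2 : IsMixed σ2) (h3 : IsMixed σ3) :
    Finset.univ.inf' (Finset.univ_nonempty) (fun x : S1 × S2 × S3 => w x.1 x.2.1 x.2.2)
      ≤ expPure1 w a σ2 σ3 := by
  set m := Finset.univ.inf' (Finset.univ_nonempty) (fun x : S1 × S2 × S3 => w x.1 x.2.1 x.2.2)
  have key : ∀ b c, σ2 b * σ3 c * m ≤ σ2 b * σ3 c * w a b c := by
    intro b c
    have hm : m ≤ w a b c := Finset.inf'_le _ (Finset.mem_univ (a, b, c))
    exact mul_le_mul_of_nonneg_left hm (mul_nonneg (h2.1 b) (h3.1 c))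
  have : ∑ b, ∑ c, σ2 b * σ3 c * m = m := by
    have : ∑ b, ∑ c, σ2 b * σ3 c * m = (∑ b, σ2 b) * (∑ c, σ3 c) * m := by
      rw [Finset.sum_mul, Finset.sum_mul]
      refine Finset.sum_congr rfl fun b _ => ?_
      conv_rhs => rw [Finset.mul_sum, Finset.sum_mul]
    rw [this, h2.2, h3.2, one_mul, one_mul]
  calc m = ∑ b, ∑ c, σ2 b * σ3 c * m := this.symm
    _ ≤ _ := Finset.sum_le_sum fun b _ => Finset.sum_le_sum fun c _ => key b c

lemma expPure1_payBot_some {S1 S2 S3 : Type*} [Fintype S2] [Fintype S3]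
    (u1 : S1 → S2 → S3 → ℤ) (r : ℤ) (a : S1)
    (σ2 : Option S2 → ℝ) (σ3 : Option S3 → ℝ)
    (h2s : ∑ b, σ2 b = 1) (h3s : ∑ c, σ3 c = 1) :
    expPure1 (payBot u1 r) (some a) σ2 σ3
      = (1 - (∑ b, σ2 (some b)) * (∑ c, σ3 (some c))) * r
        + ∑ b, ∑ c, σ2 (some b) * σ3 (some c) * (u1 a b c : ℝ) := by
  rw [Fintype.sum_option] at h2s h3s
  simp only [expPure1, Fintype.sum_option, payBot]
  have A : ∀ x : ℝ, ∑ c : S3, x * σ3 (some c) * (r : ℝ)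
      = x * (∑ c, σ3 (some c)) * r := by
    intro x; conv_rhs => rw [Finset.mul_sum, Finset.sum_mul]
  have B : ∑ b : S2, (σ2 (some b) * σ3 none * (r : ℝ)
        + ∑ c, σ2 (some b) * σ3 (some c) * (u1 a b c : ℝ))
      = (∑ b, σ2 (some b)) * σ3 none * r
        + ∑ b, ∑ c, σ2 (some b) * σ3 (some c) * (u1 a b c : ℝ) := by
    rw [Finset.sum_add_distrib]
    congr 1
    conv_rhs => rw [Finset.sum_mul, Finset.sum_mul]
  rw [A, B]
  have hn2 : σ2 none = 1 - ∑ b, σ2 (some b) := by linarith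
  have hn3 : σ3 none = 1 - ∑ c, σ3 (some c) := by linarith
  rw [hn2, hn3]; ring

lemma expMix3_payBot_none {S1 S2 S3 : Type*} [Fintype S1] [Fintype S2] [Fintype S3]
    [DecidableEq S1]
    (u1 : S1 → S2 → S3 → ℤ) (r : ℤ)
    (σ2 : Option S2 → ℝ) (σ3 : Option S3 → ℝ)
    (h2s : ∑ b, σ2 b = 1) (h3s : ∑ c, σ3 c = 1) :
    expMix3 (payBot u1 r) (pureStrat (none : Option S1)) σ2 σ3 = r := by
  rw [expMix3_pure]
  have : ∀ b c, σ2 b * σ3 c * payBot u1 r none b c = σ2 b * σ3 c * r := by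
    intro b c; simp [payBot]
  simp only [expPure1, this]
  have : ∑ b, ∑ c, σ2 b * σ3 c * (r:ℝ) = (∑ b, σ2 b) * (∑ c, σ3 c) * r := by
    rw [Finset.sum_mul, Finset.sum_mul]
    refine Finset.sum_congr rfl fun b _ => ?_
    conv_rhs => rw [Finset.mul_sum, Finset.sum_mul]
  rw [this, h2s, h3s, one_mul, one_mul]

/-- against fully mixed `σ2, σ3` in `G'`, if Player 1's minmax value in
`G` exceeds `r`, then Player 1 has a pure reply with expected payoff `> r`; in
particular `⊥` is not a best reply. -/
theorem exists_pure_reply_gt_of_minmax_gt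
    {S1 S2 S3 : Type*} [Fintype S1] [Fintype S2] [Fintype S3]
    [Nonempty S1] [Nonempty S2] [Nonempty S3]
    [DecidableEq S1] [DecidableEq S2] [DecidableEq S3]
    (u1 : S1 → S2 → S3 → ℤ) (r : ℤ)
    (σ2 : Option S2 → ℝ) (σ3 : Option S3 → ℝ)
    (h2 : IsFullyMixed σ2) (h3 : IsFullyMixed σ3)
    (h : (r : ℝ) < minmaxVal (fun a b c => (u1 a b c : ℝ))) :
    (∃ a : Option S1, (r : ℝ) < expPure1 (payBot u1 r) a σ2 σ3) ∧
    ¬ (∀ τ, IsMixed τ →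
        expMix3 (payBot u1 r) τ σ2 σ3
          ≤ expMix3 (payBot u1 r) (pureStrat (none : Option S1)) σ2 σ3) := by
  set w : S1 → S2 → S3 → ℝ := fun a b c => (u1 a b c : ℝ) with hw
  set p2 : ℝ := ∑ b, σ2 (some b) with hp2def
  set p3 : ℝ := ∑ c, σ3 (some c) with hp3def
  have hp2 : 0 < p2 := Finset.sum_pos (fun b _ => h2.1 (some b)) Finset.univ_nonempty
  have hp3 : 0 < p3 := Finset.sum_pos (fun c _ => h3.1 (some c)) Finset.univ_nonempty
  set τ2 : S2 → ℝ := fun b => σ2 (some b) / p2 with hτ2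
  set τ3 : S3 → ℝ := fun c => σ3 (some c) / p3 with hτ3
  have hm2 : IsMixed τ2 := by
    refine ⟨fun b => div_nonneg (h2.1 (some b)).le hp2.le, ?_⟩
    rw [hτ2]; rw [← Finset.sum_div, ← hp2def, div_self hp2.ne']
  have hm3 : IsMixed τ3 := by
    refine ⟨fun c => div_nonneg (h3.1 (some c)).le hp3.le, ?_⟩
    rw [hτ3]; rw [← Finset.sum_div, ← hp3def, div_self hp3.ne']
  -- the minmax set is bounded below
  set m : ℝ := Finset.univ.inf' (Finset.univ_nonempty)
      (fun x : S1 × S2 × S3 => w x.1 x.2.1 x.2.2) with hm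
  have hbdd : BddBelow {x | ∃ σ2' σ3', IsMixed σ2' ∧ IsMixed σ3' ∧
      x = ⨆ a, expPure1 w a σ2' σ3'} := by
    refine ⟨m, fun x hx => ?_⟩
    obtain ⟨σ2', σ3', hσ2', hσ3', rfl⟩ := hx
    have a0 : S1 := Classical.arbitrary S1
    calc m ≤ expPure1 w a0 σ2' σ3' := expPure1_ge w a0 σ2' σ3' hσ2' hσ3'
      _ ≤ ⨆ a, expPure1 w a σ2' σ3' :=
        le_ciSup (f := fun a => expPure1 w a σ2' σ3')
          (Set.Finite.bddAbove (Set.finite_range _)) a0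
  have hmem : (⨆ a, expPure1 w a τ2 τ3) ∈ {x | ∃ σ2' σ3', IsMixed σ2' ∧ IsMixed σ3' ∧
      x = ⨆ a, expPure1 w a σ2' σ3'} := ⟨τ2, τ3, hm2, hm3, rfl⟩
  have hsup : (r : ℝ) < ⨆ a, expPure1 w a τ2 τ3 :=
    lt_of_lt_of_le h (csInf_le hbdd hmem)
  obtain ⟨a0, ha0⟩ := Finite.exists_max (fun a => expPure1 w a τ2 τ3)
  have hfr : (r : ℝ) < expPure1 w a0 τ2 τ3 :=
    lt_of_lt_of_le hsup (ciSup_le ha0)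
  -- compute the payoff of (some a0) in G'
  have hsplit : ∑ b, ∑ c, σ2 (some b) * σ3 (some c) * w a0 b c
      = p2 * p3 * expPure1 w a0 τ2 τ3 := by
    simp only [expPure1, Finset.mul_sum]
    refine Finset.sum_congr rfl fun b _ => Finset.sum_congr rfl fun c _ => ?_
    rw [hτ2, hτ3]
    field_simp
  have hE : expPure1 (payBot u1 r) (some a0) σ2 σ3
      = (1 - p2 * p3) * r + p2 * p3 * expPure1 w a0 τ2 τ3 := by
    rw [expPure1_payBot_some u1 r a0 σ2 σ3 h2.2 h3.2, ← hp2def, ← hp3def, hsplit]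
  have hgt : (r : ℝ) < expPure1 (payBot u1 r) (some a0) σ2 σ3 := by
    rw [hE]
    nlinarith [mul_pos (mul_pos hp2 hp3) (sub_pos.2 hfr)]
  refine ⟨⟨some a0, hgt⟩, fun hall => ?_⟩
  have := hall (pureStrat (some a0)) (pureStrat_mixed _)
  rw [expMix3_pure, expMix3_payBot_none u1 r σ2 σ3 h2.2 h3.2] at this
  linarith
end

section
/- Let (τ2, τ3) be a minmax profile for Players 2 and 3 in G achieving minmax value v < r for Player 1. Define σ_k = (1 - 1/k - 1/k²)·(⊥,⊥,⊥) + (1/k)·τ + (1/k²)·u in G', where τ extends (τ2,τ3) arbitrarily and u is the uniform profile. Then for all sufficiently large k, ⊥ is a best reply for Player 1 to (σ_{k,2}, σ_{k,3}): every pure strategy of Player 1 earns expected payoff at most r against (σ_{k,2}, σ_{k,3}). -/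
set_option maxHeartbeats 1000000


open Filter

lemma aux_sum_sum_mul {A B : Type*} [Fintype A] [Fintype B] (f : A → ℝ) (g : B → ℝ) (K : ℝ) :
    ∑ a, ∑ b, f a * g b * K = (∑ a, f a) * (∑ b, g b) * K := by
  simp [Finset.sum_mul, Finset.mul_sum, mul_assoc]
  exact Finset.sum_comm

lemma aux_coef_sum_mul {A B : Type*} [Fintype A] [Fintype B] (f : A → ℝ) (g : B → ℝ)
    (hf : ∑ a, f a = 1) (hg : ∑ b, g b = 1) (p q s K : ℝ) :
    ∑ a : A, ∑ b : B, ((p * f a + q * g b + s) * K)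
      = (p * (Fintype.card B : ℝ) + q * (Fintype.card A : ℝ)
        + s * (Fintype.card A : ℝ) * (Fintype.card B : ℝ)) * K := by
  simp [Finset.sum_add_distrib, ← Finset.sum_mul, ← Finset.mul_sum, hf, hg,
    Finset.sum_const, Finset.card_univ, nsmul_eq_mul, add_mul]
  ring

/-- if `(τ2, τ3)` achieves Player 1's minmax value `v < r` in `G`, then
against the perturbed profiles `σ_k` (built from `(⊥,⊥,⊥)`, the extension of
`(τ2,τ3)` and the uniform profile), eventually every pure strategy of Player 1 earns
at most `r`, i.e. `⊥` is a best reply. -/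
theorem bot_eventually_best_reply
    {S1 S2 S3 : Type*} [Fintype S1] [Fintype S2] [Fintype S3]
    [Nonempty S1] [Nonempty S2] [Nonempty S3]
    [DecidableEq S2] [DecidableEq S3]
    (u1 : S1 → S2 → S3 → ℤ) (r : ℤ) (v : ℝ)
    (τ2 : S2 → ℝ) (τ3 : S3 → ℝ) (hτ2 : IsMixed τ2) (hτ3 : IsMixed τ3)
    (hv : (⨆ a, expPure1 (fun a b c => (u1 a b c : ℝ)) a τ2 τ3) = v)
    (hmin : minmaxVal (fun a b c => (u1 a b c : ℝ)) = v)
    (hvr : v < (r : ℝ)) :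
    let τ2' : Option S2 → ℝ := fun x => Option.casesOn x 0 τ2
    let τ3' : Option S3 → ℝ := fun x => Option.casesOn x 0 τ3
    let σ2 : ℕ → Option S2 → ℝ := fun k x =>
      (1 - 1/(k:ℝ) - 1/(k:ℝ)^2) * pureStrat (none : Option S2) x + (1/(k:ℝ)) * τ2' x
        + (1/(k:ℝ)^2) * (1 / (Fintype.card (Option S2) : ℝ))
    let σ3 : ℕ → Option S3 → ℝ := fun k x =>
      (1 - 1/(k:ℝ) - 1/(k:ℝ)^2) * pureStrat (none : Option S3) x + (1/(k:ℝ)) * τ3' x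
        + (1/(k:ℝ)^2) * (1 / (Fintype.card (Option S3) : ℝ))
    ∃ N : ℕ, ∀ k ≥ N, ∀ a : Option S1,
      expPure1 (payBot u1 r) a (σ2 k) (σ3 k) ≤ (r : ℝ) := by
  
  intro τ2' τ3' σ2 σ3
  classical
  set w : S1 → S2 → S3 → ℝ := fun a b c => (u1 a b c : ℝ) with hw
  set M : ℝ := ∑ a : S1, ∑ b : S2, ∑ c : S3, |w a b c - (r:ℝ)| with hMdef
  have hM0 : 0 ≤ M :=
    Finset.sum_nonneg fun _ _ => Finset.sum_nonneg fun _ _ =>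
      Finset.sum_nonneg fun _ _ => abs_nonneg _
  have hM : ∀ a b c, |w a b c - (r:ℝ)| ≤ M := by
    intro a b c
    calc |w a b c - (r:ℝ)| ≤ ∑ c : S3, |w a b c - (r:ℝ)| :=
          Finset.single_le_sum (f := fun c => |w a b c - (r:ℝ)|)
            (fun _ _ => abs_nonneg _) (Finset.mem_univ c)
      _ ≤ ∑ b : S2, ∑ c : S3, |w a b c - (r:ℝ)| :=
          Finset.single_le_sum (f := fun b => ∑ c : S3, |w a b c - (r:ℝ)|)
            (fun _ _ => Finset.sum_nonneg fun _ _ => abs_nonneg _)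
            (Finset.mem_univ b)
      _ ≤ M := by
          rw [hMdef]
          exact Finset.single_le_sum (f := fun a => ∑ b : S2, ∑ c : S3, |w a b c - (r:ℝ)|)
            (fun _ _ => Finset.sum_nonneg fun _ _ => Finset.sum_nonneg fun _ _ => abs_nonneg _)
            (Finset.mem_univ a)
  set ε : ℝ := (r:ℝ) - v with hεdef
  have hε : 0 < ε := by rw [hεdef]; linarith
  refine ⟨max 1 ⌈3*M/ε⌉₊, ?_⟩
  intro k hk a
  have hk1 : (1:ℕ) ≤ k := le_trans (le_max_left _ _) hk
  have hkR : (1:ℝ) ≤ (k:ℝ) := by exact_mod_cast hk1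
  have hkpos : (0:ℝ) < (k:ℝ) := lt_of_lt_of_le one_pos hkR
  obtain ⟨α, hαdef⟩ : ∃ α : ℝ, α = 1/(k:ℝ) := ⟨_, rfl⟩
  have hα0 : 0 < α := by rw [hαdef]; positivity
  have hα1 : α ≤ 1 := by rw [hαdef, div_le_one hkpos]; exact hkR
  have hαε : 3*M*α ≤ ε := by
    have h1 : 3*M/ε ≤ (k:ℝ) := by
      refine le_trans (Nat.le_ceil _) ?_
      exact_mod_cast le_trans (le_max_right _ _) hk
    have h2 : 3*M ≤ ε * (k:ℝ) := by
      rw [div_le_iff₀ hε] at h1; linarith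
    rw [hαdef, mul_one_div, div_le_iff₀ hkpos]
    linarith
  have hm2 : (Fintype.card (Option S2) : ℝ) = (Fintype.card S2 : ℝ) + 1 := by
    rw [Fintype.card_option]; push_cast; ring
  have hm3 : (Fintype.card (Option S3) : ℝ) = (Fintype.card S3 : ℝ) + 1 := by
    rw [Fintype.card_option]; push_cast; ring
  have hn2 : (0:ℝ) ≤ (Fintype.card S2 : ℝ) := Nat.cast_nonneg _
  have hn3 : (0:ℝ) ≤ (Fintype.card S3 : ℝ) := Nat.cast_nonneg _
  have hm2pos : (0:ℝ) < (Fintype.card (Option S2) : ℝ) := by rw [hm2]; linarith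
  have hm3pos : (0:ℝ) < (Fintype.card (Option S3) : ℝ) := by rw [hm3]; linarith
  obtain ⟨β2, hβ2def⟩ : ∃ b : ℝ, b = α^2 * (1 / (Fintype.card (Option S2) : ℝ)) := ⟨_, rfl⟩
  obtain ⟨β3, hβ3def⟩ : ∃ b : ℝ, b = α^2 * (1 / (Fintype.card (Option S3) : ℝ)) := ⟨_, rfl⟩
  have hβ2pos : 0 < β2 := by
    rw [hβ2def]; exact mul_pos (pow_pos hα0 2) (by positivity)
  have hβ3pos : 0 < β3 := by
    rw [hβ3def]; exact mul_pos (pow_pos hα0 2) (by positivity)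
  have hs2 : ∀ b', σ2 k (some b') = α * τ2 b' + β2 := by
    intro b'
    have h : σ2 k (some b')
        = (1/(k:ℝ)) * τ2 b' + (1/(k:ℝ)^2) * (1 / (Fintype.card (Option S2) : ℝ)) := by
      simp [σ2, τ2', pureStrat]
    rw [h, hαdef, hβ2def, hαdef]; ring
  have hs3 : ∀ c', σ3 k (some c') = α * τ3 c' + β3 := by
    intro c'
    have h : σ3 k (some c')
        = (1/(k:ℝ)) * τ3 c' + (1/(k:ℝ)^2) * (1 / (Fintype.card (Option S3) : ℝ)) := by
      simp [σ3, τ3', pureStrat]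
    rw [h, hαdef, hβ3def, hαdef]; ring
  have hσ2sum : ∑ b, σ2 k b = 1 := by
    have h1 : ∑ x : Option S2, pureStrat (none : Option S2) x = 1 := by simp [pureStrat]
    have h2 : ∑ x : Option S2, τ2' x = 1 := by
      rw [Fintype.sum_option]; simpa [τ2'] using hτ2.2
    have h3 : ∑ _x : Option S2, (1/(k:ℝ)^2) * (1 / (Fintype.card (Option S2) : ℝ))
        = 1/(k:ℝ)^2 := by
      rw [Finset.sum_const, Finset.card_univ, nsmul_eq_mul]
      field_simp
    simp only [σ2]
    rw [Finset.sum_add_distrib, Finset.sum_add_distrib, ← Finset.mul_sum, ← Finset.mul_sum,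
      h1, h2, h3]
    ring
  have hσ3sum : ∑ c, σ3 k c = 1 := by
    have h1 : ∑ x : Option S3, pureStrat (none : Option S3) x = 1 := by simp [pureStrat]
    have h2 : ∑ x : Option S3, τ3' x = 1 := by
      rw [Fintype.sum_option]; simpa [τ3'] using hτ3.2
    have h3 : ∑ _x : Option S3, (1/(k:ℝ)^2) * (1 / (Fintype.card (Option S3) : ℝ))
        = 1/(k:ℝ)^2 := by
      rw [Finset.sum_const, Finset.card_univ, nsmul_eq_mul]
      field_simp
    simp only [σ3]
    rw [Finset.sum_add_distrib, Finset.sum_add_distrib, ← Finset.mul_sum, ← Finset.mul_sum,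
      h1, h2, h3]
    ring
  rcases a with _ | a0
  · -- a = none
    have hpay : ∀ (b : Option S2) (c : Option S3), payBot u1 r none b c = (r:ℝ) := by
      intro b c; cases b <;> cases c <;> rfl
    have hcalc : expPure1 (payBot u1 r) (none : Option S1) (σ2 k) (σ3 k) = (r:ℝ) := by
      simp only [expPure1]
      calc ∑ b, ∑ c, σ2 k b * σ3 k c * payBot u1 r none b c
          = ∑ b, ∑ c, σ2 k b * σ3 k c * (r:ℝ) :=
            Finset.sum_congr rfl fun b _ => Finset.sum_congr rfl fun c _ => by rw [hpay]
        _ = (∑ b, σ2 k b) * (∑ c, σ3 k c) * (r:ℝ) := aux_sum_sum_mul _ _ _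
        _ = (r:ℝ) := by rw [hσ2sum, hσ3sum]; ring
    exact hcalc.le
  · -- a = some a0
    obtain ⟨g, hg⟩ : ∃ g : Option S2 → Option S3 → ℝ,
        g = fun b c => Option.casesOn b 0
          (fun b' => Option.casesOn c 0 (fun c' => w a0 b' c' - (r:ℝ))) := ⟨_, rfl⟩
    have hgnone : ∀ c, g none c = 0 := fun c => by rw [hg]
    have hgnone2 : ∀ b, g b none = 0 := fun b => by rw [hg]; cases b <;> rfl
    have hgsome : ∀ b' c', g (some b') (some c') = w a0 b' c' - (r:ℝ) := fun b' c' => by rw [hg]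
    have hpay : ∀ (b : Option S2) (c : Option S3),
        payBot u1 r (some a0) b c = (r:ℝ) + g b c := by
      intro b c
      cases b <;> cases c <;> simp [payBot, hg, hw]
    have hS : ∑ b : Option S2, ∑ c : Option S3, σ2 k b * σ3 k c * g b c
        = ∑ b' : S2, ∑ c' : S3,
            (α * τ2 b' + β2) * (α * τ3 c' + β3) * (w a0 b' c' - (r:ℝ)) := by
      rw [Fintype.sum_option]
      have h0 : ∑ c : Option S3, σ2 k none * σ3 k c * g none c = 0 := by
        simp [hgnone]
      rw [h0, zero_add]
      refine Finset.sum_congr rfl fun b' _ => ?_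
      rw [Fintype.sum_option]
      have h1 : σ2 k (some b') * σ3 k none * g (some b') none = 0 := by
        rw [hgnone2]; ring
      rw [h1, zero_add]
      refine Finset.sum_congr rfl fun c' _ => ?_
      rw [hs2, hs3, hgsome]
    have key : expPure1 (payBot u1 r) (some a0) (σ2 k) (σ3 k)
        = (r:ℝ) + ∑ b' : S2, ∑ c' : S3,
            (α * τ2 b' + β2) * (α * τ3 c' + β3) * (w a0 b' c' - (r:ℝ)) := by
      simp only [expPure1]
      calc ∑ b, ∑ c, σ2 k b * σ3 k c * payBot u1 r (some a0) b c
          = ∑ b, ∑ c, (σ2 k b * σ3 k c * (r:ℝ) + σ2 k b * σ3 k c * g b c) :=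
            Finset.sum_congr rfl fun b _ => Finset.sum_congr rfl fun c _ => by
              rw [hpay]; ring
        _ = (∑ b, ∑ c, σ2 k b * σ3 k c * (r:ℝ))
            + ∑ b, ∑ c, σ2 k b * σ3 k c * g b c := by
            rw [← Finset.sum_add_distrib]
            exact Finset.sum_congr rfl fun b _ => Finset.sum_add_distrib
        _ = (∑ b, σ2 k b) * (∑ c, σ3 k c) * (r:ℝ)
            + ∑ b' : S2, ∑ c' : S3,
              (α * τ2 b' + β2) * (α * τ3 c' + β3) * (w a0 b' c' - (r:ℝ)) := by
            rw [aux_sum_sum_mul, hS]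
        _ = _ := by rw [hσ2sum, hσ3sum]; ring
    have hT : ∑ b' : S2, ∑ c' : S3, τ2 b' * τ3 c' * (w a0 b' c' - (r:ℝ)) ≤ v - (r:ℝ) := by
      have e1 : ∑ b' : S2, ∑ c' : S3, τ2 b' * τ3 c' * (w a0 b' c' - (r:ℝ))
          = expPure1 w a0 τ2 τ3 - (∑ b', τ2 b') * (∑ c', τ3 c') * (r:ℝ) := by
        simp only [expPure1]
        rw [← aux_sum_sum_mul, ← Finset.sum_sub_distrib]
        refine Finset.sum_congr rfl fun b' _ => ?_
        rw [← Finset.sum_sub_distrib]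
        refine Finset.sum_congr rfl fun c' _ => ?_
        ring
      have hle : expPure1 w a0 τ2 τ3 ≤ v := by
        rw [← hv]
        exact le_ciSup (f := fun a => expPure1 w a τ2 τ3) ((Set.finite_range _).bddAbove) a0
      rw [e1, hτ2.2, hτ3.2]
      linarith
    have hsplit : ∑ b' : S2, ∑ c' : S3,
          (α * τ2 b' + β2) * (α * τ3 c' + β3) * (w a0 b' c' - (r:ℝ))
        = α^2 * (∑ b' : S2, ∑ c' : S3, τ2 b' * τ3 c' * (w a0 b' c' - (r:ℝ)))
          + ∑ b' : S2, ∑ c' : S3,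
            ((α*β3) * τ2 b' + (α*β2) * τ3 c' + β2*β3) * (w a0 b' c' - (r:ℝ)) := by
      rw [Finset.mul_sum, ← Finset.sum_add_distrib]
      refine Finset.sum_congr rfl fun b' _ => ?_
      rw [Finset.mul_sum, ← Finset.sum_add_distrib]
      refine Finset.sum_congr rfl fun c' _ => ?_
      ring
    have hcoef : ∀ b' c', (0:ℝ) ≤ (α*β3) * τ2 b' + (α*β2) * τ3 c' + β2*β3 := by
      intro b' c'
      have := hτ2.1 b'
      have := hτ3.1 c'
      have h1 : 0 ≤ (α*β3) * τ2 b' := mul_nonneg (mul_nonneg hα0.le hβ3pos.le) (hτ2.1 b')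
      have h2 : 0 ≤ (α*β2) * τ3 c' := mul_nonneg (mul_nonneg hα0.le hβ2pos.le) (hτ3.1 c')
      have h3 : 0 ≤ β2*β3 := mul_nonneg hβ2pos.le hβ3pos.le
      linarith
    have hR : ∑ b' : S2, ∑ c' : S3,
          ((α*β3) * τ2 b' + (α*β2) * τ3 c' + β2*β3) * (w a0 b' c' - (r:ℝ))
        ≤ 3 * (M * α^3) := by
      have hb1 : α*β3*(Fintype.card S3 : ℝ) ≤ α^3 := by
        have hq : (Fintype.card S3 : ℝ) * (1 / (Fintype.card (Option S3) : ℝ)) ≤ 1 := by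
          rw [mul_one_div, div_le_one hm3pos, hm3]; linarith
        calc α*β3*(Fintype.card S3 : ℝ)
            = α^3 * ((Fintype.card S3 : ℝ) * (1 / (Fintype.card (Option S3) : ℝ))) := by
              rw [hβ3def]; ring
          _ ≤ α^3 * 1 := mul_le_mul_of_nonneg_left hq (by positivity)
          _ = α^3 := mul_one _
      have hb2 : α*β2*(Fintype.card S2 : ℝ) ≤ α^3 := by
        have hq : (Fintype.card S2 : ℝ) * (1 / (Fintype.card (Option S2) : ℝ)) ≤ 1 := by
          rw [mul_one_div, div_le_one hm2pos, hm2]; linarith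
        calc α*β2*(Fintype.card S2 : ℝ)
            = α^3 * ((Fintype.card S2 : ℝ) * (1 / (Fintype.card (Option S2) : ℝ))) := by
              rw [hβ2def]; ring
          _ ≤ α^3 * 1 := mul_le_mul_of_nonneg_left hq (by positivity)
          _ = α^3 := mul_one _
      have hb3 : β2*β3*(Fintype.card S2 : ℝ)*(Fintype.card S3 : ℝ) ≤ α^3 := by
        have hq2 : (Fintype.card S2 : ℝ) * (1 / (Fintype.card (Option S2) : ℝ)) ≤ 1 := by
          rw [mul_one_div, div_le_one hm2pos, hm2]; linarith
        have hq3 : (Fintype.card S3 : ℝ) * (1 / (Fintype.card (Option S3) : ℝ)) ≤ 1 := by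
          rw [mul_one_div, div_le_one hm3pos, hm3]; linarith
        have hq2' : 0 ≤ (Fintype.card S2 : ℝ) * (1 / (Fintype.card (Option S2) : ℝ)) := by
          positivity
        have hq3' : 0 ≤ (Fintype.card S3 : ℝ) * (1 / (Fintype.card (Option S3) : ℝ)) := by
          positivity
        have hqq : ((Fintype.card S2 : ℝ) * (1 / (Fintype.card (Option S2) : ℝ)))
            * ((Fintype.card S3 : ℝ) * (1 / (Fintype.card (Option S3) : ℝ))) ≤ 1 :=
          mul_le_one₀ hq2 hq3' hq3
        have h4 : α^4 ≤ α^3 := by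
          calc α^4 = α^3 * α := by ring
            _ ≤ α^3 * 1 := mul_le_mul_of_nonneg_left hα1 (by positivity)
            _ = α^3 := mul_one _
        calc β2*β3*(Fintype.card S2 : ℝ)*(Fintype.card S3 : ℝ)
            = α^4 * (((Fintype.card S2 : ℝ) * (1 / (Fintype.card (Option S2) : ℝ)))
                * ((Fintype.card S3 : ℝ) * (1 / (Fintype.card (Option S3) : ℝ)))) := by
              rw [hβ2def, hβ3def]; ring
          _ ≤ α^4 * 1 := mul_le_mul_of_nonneg_left hqq (by positivity)
          _ = α^4 := mul_one _
          _ ≤ α^3 := h4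
      calc ∑ b' : S2, ∑ c' : S3,
            ((α*β3) * τ2 b' + (α*β2) * τ3 c' + β2*β3) * (w a0 b' c' - (r:ℝ))
          ≤ ∑ b' : S2, ∑ c' : S3,
            ((α*β3) * τ2 b' + (α*β2) * τ3 c' + β2*β3) * M := by
            refine Finset.sum_le_sum fun b' _ => Finset.sum_le_sum fun c' _ => ?_
            exact mul_le_mul_of_nonneg_left
              (le_trans (le_abs_self _) (hM a0 b' c')) (hcoef b' c')
        _ = ((α*β3) * (Fintype.card S3 : ℝ) + (α*β2) * (Fintype.card S2 : ℝ)
              + (β2*β3) * (Fintype.card S2 : ℝ) * (Fintype.card S3 : ℝ)) * M :=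
            aux_coef_sum_mul τ2 τ3 hτ2.2 hτ3.2 _ _ _ _
        _ ≤ (α^3 + α^3 + α^3) * M := by
            refine mul_le_mul_of_nonneg_right ?_ hM0
            have : β2*β3*(Fintype.card S2 : ℝ)*(Fintype.card S3 : ℝ)
                = (β2*β3) * (Fintype.card S2 : ℝ) * (Fintype.card S3 : ℝ) := by ring
            linarith [hb1, hb2, hb3]
        _ = 3 * (M * α^3) := by ring
    rw [key, hsplit]
    have h4 : α^2 * (∑ b' : S2, ∑ c' : S3, τ2 b' * τ3 c' * (w a0 b' c' - (r:ℝ)))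
        ≤ α^2 * (v - (r:ℝ)) := mul_le_mul_of_nonneg_left hT (sq_nonneg α)
    have h5 : 3 * (M * α^3) ≤ ε * α^2 := by
      calc 3 * (M * α^3) = (3*M*α) * α^2 := by ring
        _ ≤ ε * α^2 := mul_le_mul_of_nonneg_right hαε (sq_nonneg α)
    have h6 : α^2 * (v - (r:ℝ)) = -(ε * α^2) := by rw [hεdef]; ring
    linarith
end

section
/- If the minmax value of Player 1 in G is strictly greater than r, then for every fully mixed pair (σ2, σ3) of strategies of Players 2 and 3 in G', playing ⊥ is strictly suboptimal for Player 1: his best-reply value against (σ2, σ3) is strictly greater than r. -/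
open Filter

/-- if Player 1's minmax value in `G` exceeds `r`, then against every
fully mixed pair `(σ2, σ3)` in `G'`, Player 1's best-reply value is strictly
greater than `r`, so `⊥` (whose payoff is `r`) is strictly suboptimal. -/
theorem bot_strictly_suboptimal_of_minmax_gt
    {S1 S2 S3 : Type*} [Fintype S1] [Fintype S2] [Fintype S3]
    [Nonempty S1] [Nonempty S2] [Nonempty S3]
    (u1 : S1 → S2 → S3 → ℤ) (r : ℤ)
    (h : (r : ℝ) < minmaxVal (fun a b c => (u1 a b c : ℝ))) :
    ∀ σ2 : Option S2 → ℝ, ∀ σ3 : Option S3 → ℝ,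
      IsFullyMixed σ2 → IsFullyMixed σ3 →
      (r : ℝ) < ⨆ a : Option S1, expPure1 (payBot u1 r) a σ2 σ3 ∧
      expPure1 (payBot u1 r) (none : Option S1) σ2 σ3
        < ⨆ a : Option S1, expPure1 (payBot u1 r) a σ2 σ3 := by
  classical
  intro σ2 σ3 h2 h3
  obtain ⟨h2pos, h2sum⟩ := h2
  obtain ⟨h3pos, h3sum⟩ := h3
  set w : S1 → S2 → S3 → ℝ := fun a b c => (u1 a b c : ℝ) with hw
  set p := ∑ b : S2, σ2 (some b) with hpdef
  set q := ∑ c : S3, σ3 (some c) with hqdef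
  have hp : 0 < p := Finset.sum_pos (fun b _ => h2pos _) Finset.univ_nonempty
  have hq : 0 < q := Finset.sum_pos (fun c _ => h3pos _) Finset.univ_nonempty
  set τ2 : S2 → ℝ := fun b => σ2 (some b) / p with hτ2def
  set τ3 : S3 → ℝ := fun c => σ3 (some c) / q with hτ3def
  have hτ2 : IsMixed τ2 := by
    refine ⟨fun b => div_nonneg (h2pos _).le hp.le, ?_⟩
    simp only [hτ2def]
    rw [← Finset.sum_div]
    exact div_self hp.ne'
  have hτ3 : IsMixed τ3 := by
    refine ⟨fun c => div_nonneg (h3pos _).le hq.le, ?_⟩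
    simp only [hτ3def]
    rw [← Finset.sum_div]
    exact div_self hq.ne'
  -- lower bound on payoff entries
  obtain ⟨M, hM⟩ := Finite.exists_le (fun t : S1 × S2 × S3 => -w t.1 t.2.1 t.2.2)
  set m : ℝ := -M with hmdef
  have hm : ∀ a b c, m ≤ w a b c := by
    intro a b c
    have := hM (a, b, c)
    simp only [hmdef]
    linarith
  -- any element of the minmax set is ≥ m
  have hlb : ∀ x ∈ {x | ∃ ς2 ς3, IsMixed ς2 ∧ IsMixed ς3 ∧ x = ⨆ a, expPure1 w a ς2 ς3},
      m ≤ x := by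
    rintro x ⟨ς2, ς3, ⟨h2p, h2s⟩, ⟨h3p, h3s⟩, rfl⟩
    obtain ⟨a0⟩ := (inferInstance : Nonempty S1)
    have h1 : m ≤ expPure1 w a0 ς2 ς3 := by
      have : (∑ b, ∑ c, ς2 b * ς3 c * m) ≤ expPure1 w a0 ς2 ς3 := by
        rw [expPure1]
        refine Finset.sum_le_sum fun b _ => Finset.sum_le_sum fun c _ => ?_
        exact mul_le_mul_of_nonneg_left (hm a0 b c) (mul_nonneg (h2p b) (h3p c))
      calc m = (∑ b, ∑ c, ς2 b * ς3 c * m) := by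
              rw [show (∑ b, ∑ c, ς2 b * ς3 c * m) = (∑ b, ς2 b) * ((∑ c, ς3 c) * m) by
                rw [Finset.sum_mul]
                refine Finset.sum_congr rfl fun b _ => ?_
                rw [Finset.sum_mul, Finset.mul_sum]
                refine Finset.sum_congr rfl fun c _ => ?_
                ring]
              rw [h2s, h3s]; ring
        _ ≤ expPure1 w a0 ς2 ς3 := this
    exact h1.trans (le_ciSup (f := fun a => expPure1 w a ς2 ς3)
      (Set.Finite.bddAbove (Set.finite_range _)) a0)
  have hmem : (⨆ a, expPure1 w a τ2 τ3) ∈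
      {x | ∃ ς2 ς3, IsMixed ς2 ∧ IsMixed ς3 ∧ x = ⨆ a, expPure1 w a ς2 ς3} :=
    ⟨τ2, τ3, hτ2, hτ3, rfl⟩
  have hminmax : minmaxVal w ≤ ⨆ a, expPure1 w a τ2 τ3 := csInf_le ⟨m, hlb⟩ hmem
  have hrlt : (r : ℝ) < ⨆ a, expPure1 w a τ2 τ3 := lt_of_lt_of_le h hminmax
  obtain ⟨a0, ha0⟩ : ∃ a0, (r : ℝ) < expPure1 w a0 τ2 τ3 :=
    (lt_ciSup_iff (Set.Finite.bddAbove (Set.finite_range _))).mp hrlt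
  -- sums for strategies over Option
  have h2opt : σ2 none + p = 1 := by rw [hpdef, ← Fintype.sum_option]; exact h2sum
  have h3opt : σ3 none + q = 1 := by rw [hqdef, ← Fintype.sum_option]; exact h3sum
  set S : ℝ := ∑ b : S2, ∑ c : S3, σ2 (some b) * σ3 (some c) * w a0 b c with hSdef
  have hpqE : p * q * expPure1 w a0 τ2 τ3 = S := by
    rw [expPure1, hSdef, Finset.mul_sum]
    refine Finset.sum_congr rfl fun b _ => ?_
    rw [Finset.mul_sum]
    refine Finset.sum_congr rfl fun c _ => ?_
    simp only [hτ2def, hτ3def]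
    field_simp
  -- payoff of none is r
  have hnone : expPure1 (payBot u1 r) (none : Option S1) σ2 σ3 = r := by
    have hpay : ∀ (b : Option S2) (c : Option S3), payBot u1 r none b c = (r : ℝ) :=
      fun b c => by cases b <;> cases c <;> rfl
    rw [expPure1]
    have hin : ∀ b : Option S2, (∑ c : Option S3, σ2 b * σ3 c * payBot u1 r none b c)
        = σ2 b * r := by
      intro b
      rw [show σ2 b * (r : ℝ) = σ2 b * ((∑ c : Option S3, σ3 c) * r) by rw [h3sum]; ring]
      rw [Finset.sum_mul, Finset.mul_sum]
      exact Finset.sum_congr rfl fun c _ => by rw [hpay]; ring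
    simp only [hin]
    rw [← Finset.sum_mul, h2sum, one_mul]
  -- payoff of some a0
  have hsome : expPure1 (payBot u1 r) (some a0) σ2 σ3
      = σ2 none * ((r : ℝ)) + p * (σ3 none * r) + S := by
    rw [expPure1, Fintype.sum_option]
    have hfirst : (∑ c : Option S3, σ2 none * σ3 c * payBot u1 r (some a0) none c)
        = σ2 none * ((∑ c : Option S3, σ3 c) * (r : ℝ)) := by
      rw [Finset.sum_mul, Finset.mul_sum]
      refine Finset.sum_congr rfl fun c _ => ?_
      have : payBot u1 r (some a0) none c = (r : ℝ) := by cases c <;> rfl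
      rw [this]; ring
    have hsec : (∑ b : S2, ∑ c : Option S3, σ2 (some b) * σ3 c * payBot u1 r (some a0) (some b) c)
        = ∑ b : S2, (σ2 (some b) * (σ3 none * (r : ℝ))
            + ∑ c : S3, σ2 (some b) * σ3 (some c) * w a0 b c) := by
      refine Finset.sum_congr rfl fun b _ => ?_
      rw [Fintype.sum_option]
      congr 1
      have : payBot u1 r (some a0) (some b) none = (r : ℝ) := rfl
      rw [this]
      try ring
    rw [hfirst, hsec, Finset.sum_add_distrib, ← Finset.sum_mul, h3sum, ← hSdef, ← hpdef]
    ring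
  have hSgt : p * q * (r : ℝ) < S := by
    rw [← hpqE]
    exact mul_lt_mul_of_pos_left ha0 (mul_pos hp hq)
  have hkey : (r : ℝ) < expPure1 (payBot u1 r) (some a0) σ2 σ3 := by
    rw [hsome]
    have e2 : σ2 none = 1 - p := by linarith
    have e3 : σ3 none = 1 - q := by linarith
    rw [e2, e3]
    nlinarith
  have hsup : expPure1 (payBot u1 r) (some a0) σ2 σ3
      ≤ ⨆ a : Option S1, expPure1 (payBot u1 r) a σ2 σ3 :=
    le_ciSup (f := fun a => expPure1 (payBot u1 r) a σ2 σ3)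
      (Set.Finite.bddAbove (Set.finite_range _)) (some a0)
  constructor
  · exact lt_of_lt_of_le hkey hsup
  · rw [hnone]; exact lt_of_lt_of_le hkey hsup
end
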